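/- arXiv:1512.08071 — 2 statements merged into one kernel-verified Lean document; each statement's English description precedes it below -/
import Mathlib

section
/- Let H be a reduced double-well type potential with data (H_n^0), (H_n^1), and let h be the Peierls barrier of H. Then: (1) h(0^∞, x) = 0 for all x in the cylinder [0]; (2) h(0^∞, x) = inf_{k≥n} H_k^0 for all x ∈ [1^n 0], and in particular h(0^∞, 1^∞) = H_∞^0; (3) liminf of h(x, 0^∞) as x → 0^∞ with x ≠ 0^∞ equals H_min^0 + H_∞^1; (4) h(1^∞, x) = 0 for all x ∈ [1]; (5) h(1^∞, x) = inf_{k≥n} H_k^1 for all x ∈ [0^n 1], and in particular h(1^∞, 0^∞) = H_∞^1; (6) liminf of h(x, 1^∞) as x → 1^∞ with x ≠ 1^∞ equals H_min^1 + H_∞^0. -/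
open MeasureTheory Filter Topology

/-- The one-sided full shift space on two symbols. -/
abbrev Sig : Type := ℕ → Fin 2

/-- The left shift map. -/
def shft : Sig → Sig := fun x n => x (n + 1)

/-- Concatenation of a symbol with a configuration. -/
def cons2 (i : Fin 2) (x : Sig) : Sig := fun n => match n with
  | 0 => i
  | Nat.succ k => x k

/-- `x` and `y` agree on their first `n` coordinates. -/
def nClose (n : ℕ) (x y : Sig) : Prop := ∀ k, k < n → x k = y k

/-- The `n`-th variation of `H`. -/
noncomputable def Var (H : Sig → ℝ) (n : ℕ) : ℝ :=
  sSup {d : ℝ | ∃ x y : Sig, nClose n x y ∧ d = |H x - H y|}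

/-- `H` has summable variation. -/
def SummableVar (H : Sig → ℝ) : Prop := Summable (fun n : ℕ => Var H (n + 1))

/-- The transfer operator at inverse temperature `β`. -/
noncomputable def transfer (β : ℝ) (H : Sig → ℝ) (Φ : Sig → ℝ) : Sig → ℝ :=
  fun x => Real.exp (-β * H (cons2 0 x)) * Φ (cons2 0 x)
         + Real.exp (-β * H (cons2 1 x)) * Φ (cons2 1 x)

/-- The cylinder set determined by a finite word. -/
def cyl (w : List (Fin 2)) : Set Sig := {x | ∀ i : ℕ, ∀ h : i < w.length, x i = w.get ⟨i, h⟩}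

/-- The fixed point `0^∞`. -/
def zpt : Sig := fun _ => 0

/-- The fixed point `1^∞`. -/
def opt : Sig := fun _ => 1

/-- The minimizing ergodic value of `H`. -/
noncomputable def Hbar (H : Sig → ℝ) : ℝ :=
  sInf {r : ℝ | ∃ μ : Measure Sig, IsProbabilityMeasure μ ∧ μ.map shft = μ ∧ r = ∫ x, H x ∂μ}

/-- A minimizing measure for `H`. -/
def IsMinimizing (H : Sig → ℝ) (μ : Measure Sig) : Prop :=
  IsProbabilityMeasure μ ∧ μ.map shft = μ ∧
  ∀ ν : Measure Sig, IsProbabilityMeasure ν → ν.map shft = ν →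
    ∫ x, H x ∂μ ≤ ∫ x, H x ∂ν

/-- The (topological) support of a measure. -/
def mSupport (μ : Measure Sig) : Set Sig := {x | ∀ U : Set Sig, IsOpen U → x ∈ U → μ U ≠ 0}

/-- The Mather set of `H` : union of supports of minimizing measures. -/
def mather (H : Sig → ℝ) : Set Sig := {x | ∃ μ : Measure Sig, IsMinimizing H μ ∧ x ∈ mSupport μ}

/-- Birkhoff sum of the normalized potential. -/
noncomputable def birk (H : Sig → ℝ) (k : ℕ) (z : Sig) : ℝ :=
  ∑ i ∈ Finset.range k, (H (shft^[i] z) - Hbar H)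

/-- The quantity `S_n^p(x,y)` (an infimum in `EReal`, `+∞` when the defining set is empty). -/
noncomputable def SBar (H : Sig → ℝ) (p n : ℕ) (x y : Sig) : EReal :=
  sInf {s : EReal | ∃ k : ℕ, n ≤ k ∧ ∃ z : Sig, nClose p z x ∧ nClose p (shft^[k] z) y ∧
    s = (birk H k z : EReal)}

/-- The Peierls barrier `h(x,y)`; since `S_n^p(x,y)` is nondecreasing in both `n` and `p`,
the double limit is a double supremum. -/
noncomputable def peierls (H : Sig → ℝ) (x y : Sig) : EReal := ⨆ p : ℕ, ⨆ n : ℕ, SBar H p n x y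

/-- The Lax-Oleinik operator (the two preimages of `y` under the shift are `0y` and `1y`). -/
noncomputable def laxOleinik (H V : Sig → ℝ) : Sig → ℝ :=
  fun y => min (V (cons2 0 y) + H (cons2 0 y)) (V (cons2 1 y) + H (cons2 1 y))

/-- A calibrated sub-action of `H`. -/
def IsCalibrated (H V : Sig → ℝ) : Prop :=
  Continuous V ∧ laxOleinik H V = fun y => V y + Hbar H

/-- Membership in the class `𝕂`. -/
def InK (H V : Sig → ℝ) : Prop :=
  Continuous V ∧ ∀ n : ℕ, 1 ≤ n → Var V n ≤ ∑' k : ℕ, Var H (n + 1 + k)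

/-- A reduced double-well type potential with data `(H_n^0)`, `(H_n^1)` (indexed from `n = 1`). -/
structure ReducedDW (H : Sig → ℝ) (H0 H1 : ℕ → ℝ) : Prop where
  cont : Continuous H
  nonneg : ∀ x, 0 ≤ H x
  svar : SummableVar H
  zero : ∀ x ∈ cyl [0, 0] ∪ cyl [1, 1], H x = 0
  pos0 : ∀ n, 1 ≤ n → 0 < H0 n
  pos1 : ∀ n, 1 ≤ n → 0 < H1 n
  val0 : ∀ n, 1 ≤ n → ∀ x ∈ cyl (0 :: (List.replicate n 1 ++ [0])), H x = H0 n
  val1 : ∀ n, 1 ≤ n → ∀ x ∈ cyl (1 :: (List.replicate n 0 ++ [1])), H x = H1 n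
  bdd0 : ∀ k : ℕ, BddAbove (Set.range fun n : ℕ => |H0 (k + 1) - H0 (k + 1 + n)|)
  bdd1 : ∀ k : ℕ, BddAbove (Set.range fun n : ℕ => |H1 (k + 1) - H1 (k + 1 + n)|)
  sum0 : Summable (fun k : ℕ => ⨆ n : ℕ, |H0 (k + 1) - H0 (k + 1 + n)|)
  sum1 : Summable (fun k : ℕ => ⨆ n : ℕ, |H1 (k + 1) - H1 (k + 1 + n)|)

/-- A double-well type potential with data `a_n^0, a_n^1, b_n^0, b_n^1` (indexed from `n = 1`). -/
structure DW (H : Sig → ℝ) (a0 a1 b0 b1 : ℕ → ℝ) : Prop where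
  cont : Continuous H
  nonneg : ∀ x, 0 ≤ H x
  svar : SummableVar H
  anneg0 : ∀ n, 1 ≤ n → 0 ≤ a0 n
  anneg1 : ∀ n, 1 ≤ n → 0 ≤ a1 n
  bpos0 : ∀ n, 1 ≤ n → 0 < b0 n
  bpos1 : ∀ n, 1 ≤ n → 0 < b1 n
  vala0 : ∀ n, 1 ≤ n → ∀ x ∈ cyl (0 :: (List.replicate n 0 ++ [1])), H x = a0 n
  vala1 : ∀ n, 1 ≤ n → ∀ x ∈ cyl (1 :: (List.replicate n 1 ++ [0])), H x = a1 n
  valb0 : ∀ n, 1 ≤ n → ∀ x ∈ cyl (0 :: (List.replicate n 1 ++ [0])), H x = b0 n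
  valb1 : ∀ n, 1 ≤ n → ∀ x ∈ cyl (1 :: (List.replicate n 0 ++ [1])), H x = b1 n
  suma0 : Summable (fun n : ℕ => ((n + 1 : ℕ) : ℝ) * a0 (n + 1))
  suma1 : Summable (fun n : ℕ => ((n + 1 : ℕ) : ℝ) * a1 (n + 1))
  bddb0 : ∀ k : ℕ, BddAbove (Set.range fun n : ℕ => |b0 (k + 1) - b0 (k + 1 + n)|)
  bddb1 : ∀ k : ℕ, BddAbove (Set.range fun n : ℕ => |b1 (k + 1) - b1 (k + 1 + n)|)
  sumb0 : Summable (fun k : ℕ => ⨆ n : ℕ, |b0 (k + 1) - b0 (k + 1 + n)|)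
  sumb1 : Summable (fun k : ℕ => ⨆ n : ℕ, |b1 (k + 1) - b1 (k + 1 + n)|)

/-- The series `F_β(λ) = Σ_{k≥1} λ^{-k} e^{-β H_k}`. -/
noncomputable def Fser (β : ℝ) (Hs : ℕ → ℝ) (lam : ℝ) : ℝ :=
  ∑' k : ℕ, (lam ^ (k + 1))⁻¹ * Real.exp (-β * Hs (k + 1))

/-- The series `F̃_β(λ) = Σ_{k≥1} k λ^{-k} e^{-β H_k}`. -/
noncomputable def Ftser (β : ℝ) (Hs : ℕ → ℝ) (lam : ℝ) : ℝ :=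
  ∑' k : ℕ, ((k + 1 : ℕ) : ℝ) * (lam ^ (k + 1))⁻¹ * Real.exp (-β * Hs (k + 1))

/-- The data of the Ruelle-Perron-Frobenius solution and Gibbs measure at inverse temperature `β`:
eigenfunction `Φ` (positive, continuous, max 1), eigenvalue `lam`, eigenprobability `ν`,
and the Gibbs measure `μ = Φ ν / ∫ Φ dν`. -/
def GibbsData (H : Sig → ℝ) (β : ℝ) (Φ : Sig → ℝ) (lam : ℝ) (ν μ : Measure Sig) : Prop :=
  Continuous Φ ∧ (∀ x, 0 < Φ x) ∧ IsGreatest (Set.range Φ) 1 ∧ 0 < lam ∧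
  (transfer β H Φ = fun x => lam * Φ x) ∧
  IsProbabilityMeasure ν ∧
  (∀ f : Sig → ℝ, Continuous f → ∫ x, transfer β H f x ∂ν = lam * ∫ x, f x ∂ν) ∧
  μ = (ENNReal.ofReal (∫ x, Φ x ∂ν))⁻¹ • ν.withDensity (fun x => ENNReal.ofReal (Φ x))

/-!
Since `H ≥ 0` vanishes at `0^∞`, `H̄ = 0` and Birkhoff sums have nonnegative terms; moreover `H`
vanishes wherever the first two symbols agree, so an orbit segment only pays at its switches
between the two wells. A switch `0 → 1` followed by a run of at least `n` ones costs `H_m^0` for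
some `m ≥ n` if the run ends, and `H_∞^0` if it never does, hence at least `inf_{k ≥ n} H_k^0`.
Lower bounds on `h` come from the last switch before the orbit enters the target cylinder (for the
liminf, also from a switch `0 → 1` already present in `x`); upper bounds come from explicit orbits
`0^j 1^m x` which wait arbitrarily long at `0^∞`. The statements about `1^∞` follow from the
symbol swap `0 ↔ 1`, which exchanges `H^0` and `H^1`.
-/

lemma shft_iterate_apply (z : Sig) (k n : ℕ) : shft^[k] z n = z (n + k) := by
  induction k generalizing z with
  | zero => rfl
  | succ k ih => rw [Function.iterate_succ_apply, ih]; simp only [shft]; ring_nf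

@[simp]
lemma shft_cons2 (a : Fin 2) (x : Sig) : shft (cons2 a x) = x := rfl

@[simp]
lemma cons2_apply_zero (a : Fin 2) (x : Sig) : cons2 a x 0 = a := rfl

@[simp]
lemma cons2_apply_succ (a : Fin 2) (x : Sig) (n : ℕ) : cons2 a x (n + 1) = x n := rfl

lemma shft_iterate_eq_cons2 (z : Sig) (t : ℕ) : shft^[t] z = cons2 (z t) (shft^[t + 1] z) := by
  funext n
  cases n with
  | zero => simp [shft_iterate_apply]
  | succ n => simp only [cons2_apply_succ, shft_iterate_apply]; ring_nf

@[simp]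
lemma shft_iterate_iterate_cons2 (a : Fin 2) (x : Sig) (j : ℕ) :
    shft^[j] ((cons2 a)^[j] x) = x :=
  Function.LeftInverse.iterate (shft_cons2 a) j x

@[simp]
lemma shft_iterate_add_iterate_cons2 (a : Fin 2) (x : Sig) (k j : ℕ) :
    shft^[k + j] ((cons2 a)^[j] x) = shft^[k] x := by
  rw [Function.iterate_add_apply, shft_iterate_iterate_cons2]

@[simp]
lemma shft_iterate_succ_cons2 (a : Fin 2) (x : Sig) (k : ℕ) :
    shft^[k + 1] (cons2 a x) = shft^[k] x := by
  rw [Function.iterate_succ_apply, shft_cons2]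

lemma iterate_cons2_apply (a : Fin 2) (x : Sig) (j i : ℕ) :
    (cons2 a)^[j] x i = if i < j then a else x (i - j) := by
  induction j generalizing i with
  | zero => simp
  | succ j ih =>
    rw [Function.iterate_succ_apply']
    cases i with
    | zero => simp
    | succ i => simp [cons2, ih]

lemma cons2_zero_zpt : cons2 0 zpt = zpt := by
  funext n; cases n <;> rfl

@[simp]
lemma shft_iterate_zpt (k : ℕ) : shft^[k] zpt = zpt :=
  Function.iterate_fixed (f := shft) rfl k

lemma nClose_refl (p : ℕ) (x : Sig) : nClose p x x := fun _ _ => rfl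

lemma nClose_iterate_cons2_const {p j : ℕ} (hpj : p ≤ j) (a : Fin 2) (x : Sig) :
    nClose p ((cons2 a)^[j] x) (fun _ => a) := fun i hi => by
  simp [iterate_cons2_apply, show i < j by omega]

lemma mem_cyl_singleton {x : Sig} {a : Fin 2} : x ∈ cyl [a] ↔ x 0 = a := by
  refine ⟨fun h => h 0 (by simp), fun h i hi => ?_⟩
  obtain rfl : i = 0 := by simpa using hi
  exact h

lemma cons2_mem_cyl_cons {a : Fin 2} {x : Sig} {w : List (Fin 2)} :
    cons2 a x ∈ cyl (a :: w) ↔ x ∈ cyl w := by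
  constructor
  · intro h i hi
    simpa using h (i + 1) (by simpa using hi)
  · intro h i hi
    cases i with
    | zero => rfl
    | succ i => simpa using h i (by simpa using hi)

lemma iterate_cons2_mem_cyl {a : Fin 2} {x : Sig} {w : List (Fin 2)} {n : ℕ}
    (hx : x ∈ cyl (List.replicate n a ++ w)) (m : ℕ) :
    (cons2 a)^[m] x ∈ cyl (List.replicate (m + n) a ++ w) := by
  induction m with
  | zero => simpa using hx
  | succ m ih =>
    rw [Function.iterate_succ_apply', Nat.succ_add, List.replicate_succ, List.cons_append]
    exact cons2_mem_cyl_cons.2 ih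

lemma mem_cyl_replicate_append {x : Sig} {a b : Fin 2} {n : ℕ} :
    x ∈ cyl (List.replicate n a ++ [b]) ↔ (∀ i < n, x i = a) ∧ x n = b := by
  constructor
  · intro h
    refine ⟨fun i hi => ?_, ?_⟩
    · simpa [List.getElem_append_left, hi] using h i (by simp; omega)
    · simpa using h n (by simp)
  · rintro ⟨ha, hb⟩ i hi
    simp only [List.length_append, List.length_replicate, List.length_singleton] at hi
    rcases Nat.lt_or_ge i n with h | h
    · simpa [List.getElem_append_left, h] using ha i h
    · obtain rfl : i = n := by omega
      simpa using hb

section Birkhoff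

variable {H : Sig → ℝ}

@[simp]
lemma birk_zero (z : Sig) : birk H 0 z = 0 := rfl

lemma birk_add (a b : ℕ) (z : Sig) :
    birk H (a + b) z = birk H a z + birk H b (shft^[a] z) := by
  simp only [birk, Finset.sum_range_add, ← Function.iterate_add_apply, add_comm]

lemma birk_succ (k : ℕ) (z : Sig) : birk H (k + 1) z = H z - Hbar H + birk H k (shft z) := by
  rw [add_comm, birk_add]
  simp [birk]

lemma le_peierls_of_forall {x y : Sig} {c : ℝ} (p n : ℕ)
    (h : ∀ k ≥ n, ∀ z, nClose p z x → nClose p (shft^[k] z) y → c ≤ birk H k z) :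
    (c : EReal) ≤ peierls H x y := by
  refine le_iSup_of_le p (le_iSup_of_le n (le_sInf ?_))
  rintro s ⟨k, hk, z, hzx, hzy, rfl⟩
  exact EReal.coe_le_coe_iff.2 (h k hk z hzx hzy)

lemma peierls_le_of_forall {x y : Sig} {c : ℝ}
    (h : ∀ p n, ∃ k ≥ n, ∃ z, nClose p z x ∧ nClose p (shft^[k] z) y ∧ birk H k z ≤ c) :
    peierls H x y ≤ c := by
  refine iSup₂_le fun p n => ?_
  obtain ⟨k, hk, z, hzx, hzy, hc⟩ := h p n
  refine (sInf_le ?_ : SBar H p n x y ≤ birk H k z).trans (EReal.coe_le_coe_iff.2 hc)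
  exact ⟨k, hk, z, hzx, hzy, rfl⟩

lemma measurable_shft : Measurable shft :=
  measurable_pi_lambda _ fun n => measurable_pi_apply (n + 1)

lemma Hbar_eq_zero_of_nonneg (hH : ∀ x, 0 ≤ H x) (hz : H zpt = 0) : Hbar H = 0 := by
  have hmem : (0 : ℝ) ∈ {r : ℝ | ∃ μ : Measure Sig, IsProbabilityMeasure μ ∧ μ.map shft = μ ∧
      r = ∫ x, H x ∂μ} := by
    refine ⟨Measure.dirac zpt, inferInstance, ?_, ?_⟩
    · rw [Measure.map_dirac' measurable_shft]; rfl
    · rw [integral_dirac, hz]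
  refine le_antisymm (csInf_le ⟨0, ?_⟩ hmem) (le_csInf ⟨0, hmem⟩ ?_) <;>
  · rintro r ⟨μ, -, -, rfl⟩
    exact integral_nonneg hH

end Birkhoff

def flipSig (x : Sig) : Sig := fun n => x n + 1

@[simp]
lemma flipSig_apply (x : Sig) (n : ℕ) : flipSig x n = x n + 1 := rfl

lemma flipSig_involutive : Function.Involutive flipSig := fun x => by
  funext n
  simp [add_assoc]

@[simp]
lemma flipSig_flipSig (x : Sig) : flipSig (flipSig x) = x := flipSig_involutive x

lemma continuous_flipSig : Continuous flipSig :=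
  continuous_pi fun n =>
    (continuous_of_discreteTopology (f := fun a : Fin 2 => a + 1)).comp (continuous_apply n)

lemma map_flipSig_nhdsNE_zpt : map flipSig (𝓝[≠] zpt) = 𝓝[≠] opt :=
  (Homeomorph.mk flipSig_involutive.toPerm continuous_flipSig
    continuous_flipSig).map_punctured_nhds_eq zpt

@[simp]
lemma flipSig_zpt : flipSig zpt = opt := rfl

@[simp]
lemma flipSig_opt : flipSig opt = zpt := rfl

lemma flipSig_cons2 (a : Fin 2) (x : Sig) : flipSig (cons2 a x) = cons2 (a + 1) (flipSig x) := by
  funext n; cases n <;> rfl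

lemma shft_iterate_flipSig (k : ℕ) (z : Sig) : shft^[k] (flipSig z) = flipSig (shft^[k] z) := by
  funext n; simp [shft_iterate_apply]

lemma nClose_flipSig_iff {n : ℕ} {x y : Sig} : nClose n (flipSig x) (flipSig y) ↔ nClose n x y :=
  forall₂_congr fun _ _ => add_left_inj 1

lemma nClose_flipSig_left_iff {n : ℕ} {x y : Sig} :
    nClose n (flipSig x) y ↔ nClose n x (flipSig y) := by
  rw [← nClose_flipSig_iff, flipSig_flipSig]

lemma flipSig_mem_cyl_iff {x : Sig} {w : List (Fin 2)} :
    flipSig x ∈ cyl (w.map (· + 1)) ↔ x ∈ cyl w := by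
  refine forall_congr' fun i => ⟨fun h hi => ?_, fun h hi => ?_⟩
  · simpa using h (by simpa using hi)
  · simpa using h (by simpa using hi)

lemma Var_comp_flipSig (H : Sig → ℝ) (n : ℕ) : Var (H ∘ flipSig) n = Var H n := by
  refine congrArg sSup (Set.ext fun d => ⟨?_, ?_⟩)
  · rintro ⟨x, y, hxy, rfl⟩
    exact ⟨flipSig x, flipSig y, nClose_flipSig_iff.2 hxy, rfl⟩
  · rintro ⟨x, y, hxy, rfl⟩
    exact ⟨flipSig x, flipSig y, nClose_flipSig_iff.2 hxy, by simp⟩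

lemma exists_last_before {z : Sig} {a b : Fin 2} (hba : b ≠ a) (hz : z 0 = a) {k n : ℕ}
    (hk : 0 < k) (hb : ∀ r < n, z (k + r) = b) :
    ∃ t < k, z t = a ∧ ∀ i < n, shft^[t + 1] z i = b := by
  classical
  set t := Nat.findGreatest (fun i => z i = a) (k - 1)
  have htk : t < k := by have := Nat.findGreatest_le (P := fun i => z i = a) (k - 1); omega
  refine ⟨t, htk, Nat.findGreatest_spec (P := fun i => z i = a) (m := 0) (Nat.zero_le _) hz,
    fun i hi => ?_⟩
  rw [shft_iterate_apply]
  rcases Nat.lt_or_ge (i + (t + 1)) k with h | h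
  · have : z (i + (t + 1)) ≠ a :=
      Nat.findGreatest_is_greatest (P := fun i => z i = a) (n := k - 1) (by omega) (by omega)
    omega
  · rw [show i + (t + 1) = k + (i + (t + 1) - k) by omega]
    exact hb _ (by omega)

lemma le_coe_ciInf_add {ι : Type*} [Nonempty ι] {f : ι → ℝ} {a : ℝ} {y : EReal}
    (h : ∀ i, y ≤ ((f i + a : ℝ) : EReal)) : y ≤ (((⨅ i, f i) + a : ℝ) : EReal) := by
  refine EReal.le_of_forall_lt_iff_le.1 fun z hz => ?_
  obtain ⟨i, hi⟩ := exists_lt_of_ciInf_lt (show ⨅ i, f i < z - a by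
    have := EReal.coe_lt_coe_iff.1 hz; linarith)
  exact (h i).trans (EReal.coe_le_coe_iff.2 (by linarith))

lemma coe_add_le_of_tendsto_of_iInf_tail {f : ℕ → ℝ} {a c : ℝ} {y : EReal}
    (hf : Tendsto f atTop (𝓝 c)) (h : ∀ᶠ D in atTop, ((a + ⨅ k, f (D + k) : ℝ) : EReal) ≤ y) :
    ((a + c : ℝ) : EReal) ≤ y := by
  refine EReal.ge_of_forall_gt_iff_ge.1 fun z hz => ?_
  have hza : z - a < c := by have := EReal.coe_lt_coe_iff.1 hz; linarith
  obtain ⟨N, hN⟩ := eventually_atTop.1 (hf.eventually (eventually_ge_nhds hza))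
  have htail : ∀ᶠ D in atTop, (z : EReal) ≤ ((a + ⨅ k, f (D + k) : ℝ) : EReal) := by
    filter_upwards [eventually_ge_atTop N] with D hD
    have := le_ciInf fun k => hN (D + k) (by omega)
    exact EReal.coe_le_coe_iff.2 (by linarith)
  obtain ⟨D, hzD, hDy⟩ := (htail.and h).exists
  exact hzD.trans hDy

lemma tendsto_one_block_nhdsNE_zpt (m : ℕ) :
    Tendsto (fun j => (cons2 0)^[j] (cons2 0 ((cons2 1)^[m] (cons2 1 zpt)))) atTop
      (𝓝[≠] zpt) := by
  refine tendsto_nhdsWithin_iff.2 ⟨tendsto_pi_nhds.2 fun i => tendsto_const_nhds.congr' ?_, ?_⟩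
  · filter_upwards [eventually_gt_atTop i] with j hj
    simp [iterate_cons2_apply, hj, zpt]
  · refine Eventually.of_forall fun j h => ?_
    have := congrFun h (j + 1)
    simp [iterate_cons2_apply, zpt] at this

namespace ReducedDW

variable {H : Sig → ℝ} {H0 H1 : ℕ → ℝ}

lemma apply_eq_zero (hR : ReducedDW H H0 H1) {x : Sig} (h : x 0 = x 1) : H x = 0 := by
  refine hR.zero x ?_
  have hmem : x ∈ cyl [x 0, x 0] := fun i hi => by
    match i, hi with
    | 0, _ => rfl
    | 1, _ => exact h.symm
  rcases Fin.exists_fin_two.1 ⟨x 0, rfl⟩ with h0 | h0 <;> rw [h0] at hmem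
  exacts [Or.inl hmem, Or.inr hmem]

lemma Hbar_eq_zero (hR : ReducedDW H H0 H1) : Hbar H = 0 :=
  Hbar_eq_zero_of_nonneg hR.nonneg (hR.apply_eq_zero rfl)

lemma birk_eq_sum (hR : ReducedDW H H0 H1) (k : ℕ) (z : Sig) :
    birk H k z = ∑ i ∈ Finset.range k, H (shft^[i] z) := by
  simp [birk, hR.Hbar_eq_zero]

lemma birk_nonneg (hR : ReducedDW H H0 H1) (k : ℕ) (z : Sig) : 0 ≤ birk H k z := by
  rw [hR.birk_eq_sum]
  exact Finset.sum_nonneg fun i _ => hR.nonneg _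

lemma apply_shft_iterate_le_birk (hR : ReducedDW H H0 H1) {i k : ℕ} (hik : i < k) (z : Sig) :
    H (shft^[i] z) ≤ birk H k z := by
  rw [hR.birk_eq_sum]
  exact Finset.single_le_sum (f := fun i => H (shft^[i] z)) (fun i _ => hR.nonneg _)
    (Finset.mem_range.2 hik)

lemma peierls_nonneg (hR : ReducedDW H H0 H1) (x y : Sig) : 0 ≤ peierls H x y := by
  simpa using le_peierls_of_forall 0 0 fun k _ z _ _ => hR.birk_nonneg k z

lemma birk_succ_cons2 (hR : ReducedDW H H0 H1) (k : ℕ) (a : Fin 2) (x : Sig) :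
    birk H (k + 1) (cons2 a x) = H (cons2 a x) + birk H k x := by
  rw [birk_succ, hR.Hbar_eq_zero, sub_zero, shft_cons2]

lemma birk_add_iterate_cons2 (hR : ReducedDW H H0 H1) {a : Fin 2} {x : Sig} (hx : x 0 = a)
    (k j : ℕ) : birk H (k + j) ((cons2 a)^[j] x) = birk H k x := by
  induction j with
  | zero => rfl
  | succ j ih =>
    have hrun : ((cons2 a)^[j] x) 0 = a := by simp [iterate_cons2_apply, hx]
    rw [← add_assoc, Function.iterate_succ_apply', hR.birk_succ_cons2, ih,
      hR.apply_eq_zero hrun.symm, zero_add]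

lemma birk_iterate_cons2 (hR : ReducedDW H H0 H1) {a : Fin 2} {x : Sig} (hx : x 0 = a) (j : ℕ) :
    birk H j ((cons2 a)^[j] x) = 0 := by
  simpa using hR.birk_add_iterate_cons2 hx 0 j

lemma birk_zpt (hR : ReducedDW H H0 H1) (k : ℕ) : birk H k zpt = 0 := by
  simpa [Function.iterate_fixed cons2_zero_zpt k] using
    hR.birk_iterate_cons2 (a := 0) (x := zpt) rfl k

lemma apply_cons2_zero (hR : ReducedDW H H0 H1) {n : ℕ} (hn : 1 ≤ n) {y : Sig}
    (hy : y ∈ cyl (List.replicate n 1 ++ [0])) : H (cons2 0 y) = H0 n :=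
  hR.val0 n hn _ (cons2_mem_cyl_cons.2 hy)

lemma apply_cons2_zero_opt (hR : ReducedDW H H0 H1) {Hinf0 : ℝ}
    (hinf0 : Tendsto H0 atTop (𝓝 Hinf0)) : H (cons2 0 opt) = Hinf0 := by
  have hlim : Tendsto (fun m => cons2 0 ((cons2 1)^[m] zpt)) atTop (𝓝 (cons2 0 opt)) := by
    refine tendsto_pi_nhds.2 fun i => tendsto_const_nhds.congr' ?_
    filter_upwards [eventually_gt_atTop i] with m hm
    cases i with
    | zero => rfl
    | succ i => simp [iterate_cons2_apply, show i < m by omega, opt]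
  have hval : ∀ᶠ m in atTop, H (cons2 0 ((cons2 1)^[m] zpt)) = H0 m := by
    filter_upwards [eventually_ge_atTop 1] with m hm
    have hzpt : zpt ∈ cyl (List.replicate 0 1 ++ [0]) := mem_cyl_singleton.2 rfl
    exact hR.apply_cons2_zero hm (iterate_cons2_mem_cyl hzpt m)
  exact tendsto_nhds_unique ((hR.cont.tendsto _).comp hlim) (hinf0.congr' (hval.mono
    fun _ h => h.symm))

lemma iInf_le_apply_cons2_zero (hR : ReducedDW H H0 H1) {Hinf0 : ℝ}
    (hinf0 : Tendsto H0 atTop (𝓝 Hinf0)) {n : ℕ} (hn : 1 ≤ n) {y : Sig}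
    (hy : ∀ i < n, y i = 1) : ⨅ k, H0 (n + k) ≤ H (cons2 0 y) := by
  have hbdd : BddBelow (Set.range fun k => H0 (n + k)) :=
    ⟨0, by rintro _ ⟨k, rfl⟩; exact (hR.pos0 _ (by omega)).le⟩
  classical
  by_cases hzero : ∃ u, y u = 0
  · set u := Nat.find hzero
    have hnu : n ≤ u := by
      by_contra! h
      exact absurd (Nat.find_spec hzero) (by rw [hy u h]; decide)
    have hyu : y ∈ cyl (List.replicate u 1 ++ [0]) := mem_cyl_replicate_append.2
      ⟨fun i hi => Fin.eq_one_of_ne_zero _ (Nat.find_min hzero hi), Nat.find_spec hzero⟩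
    rw [hR.apply_cons2_zero (by omega) hyu, show u = n + (u - n) by omega]
    exact ciInf_le hbdd _
  · obtain rfl : y = opt := funext fun i => Fin.eq_one_of_ne_zero _ fun h => hzero ⟨i, h⟩
    rw [hR.apply_cons2_zero_opt hinf0]
    exact ge_of_tendsto' (hinf0.comp (tendsto_add_atTop_nat n))
      fun k => by simpa [add_comm] using ciInf_le hbdd k

lemma iInf_H0_le_birk (hR : ReducedDW H H0 H1) {Hinf0 : ℝ} (hinf0 : Tendsto H0 atTop (𝓝 Hinf0))
    {n k : ℕ} (hn : 1 ≤ n) (hk : 0 < k) {z : Sig} (hz : z 0 = 0)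
    (hones : ∀ r < n, z (k + r) = 1) : ⨅ m, H0 (n + m) ≤ birk H k z := by
  obtain ⟨t, htk, hzt, hrun⟩ := exists_last_before (by decide) hz hk hones
  calc ⨅ m, H0 (n + m)
      ≤ H (cons2 0 (shft^[t + 1] z)) := hR.iInf_le_apply_cons2_zero hinf0 hn hrun
    _ = H (shft^[t] z) := by rw [shft_iterate_eq_cons2 z t, hzt]
    _ ≤ birk H k z := hR.apply_shft_iterate_le_birk htk z

lemma comp_flipSig (hR : ReducedDW H H0 H1) : ReducedDW (H ∘ flipSig) H1 H0 where
  cont := hR.cont.comp continuous_flipSig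
  nonneg _ := hR.nonneg _
  svar := by simpa only [SummableVar, Var_comp_flipSig] using hR.svar
  zero x hx := hR.apply_eq_zero <| by
    rcases hx with h | h <;> simp [h 0 (by simp), h 1 (by simp)]
  pos0 := hR.pos1
  pos1 := hR.pos0
  val0 n hn x hx := hR.val1 n hn _ <| by
    simpa [List.map_replicate] using flipSig_mem_cyl_iff.2 hx
  val1 n hn x hx := hR.val0 n hn _ <| by
    simpa [List.map_replicate] using flipSig_mem_cyl_iff.2 hx
  bdd0 := hR.bdd1
  bdd1 := hR.bdd0
  sum0 := hR.sum1
  sum1 := hR.sum0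

lemma birk_comp_flipSig (hR : ReducedDW H H0 H1) (k : ℕ) (z : Sig) :
    birk (H ∘ flipSig) k z = birk H k (flipSig z) := by
  simp [hR.comp_flipSig.birk_eq_sum, hR.birk_eq_sum, shft_iterate_flipSig]

lemma peierls_comp_flipSig (hR : ReducedDW H H0 H1) (x y : Sig) :
    peierls (H ∘ flipSig) x y = peierls H (flipSig x) (flipSig y) := by
  refine iSup_congr fun p => iSup_congr fun n => congrArg sInf (Set.ext fun s => ⟨?_, ?_⟩)
  · rintro ⟨k, hk, z, hzx, hzy, rfl⟩
    refine ⟨k, hk, flipSig z, nClose_flipSig_iff.2 hzx, ?_, by rw [hR.birk_comp_flipSig]⟩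
    rwa [shft_iterate_flipSig, nClose_flipSig_iff]
  · rintro ⟨k, hk, z, hzx, hzy, rfl⟩
    refine ⟨k, hk, flipSig z, nClose_flipSig_left_iff.2 hzx, ?_, by simp [hR.birk_comp_flipSig]⟩
    rwa [shft_iterate_flipSig, nClose_flipSig_left_iff]

lemma apply_cons2_one_zpt (hR : ReducedDW H H0 H1) {Hinf1 : ℝ}
    (hinf1 : Tendsto H1 atTop (𝓝 Hinf1)) : H (cons2 1 zpt) = Hinf1 := by
  simpa [flipSig_cons2] using hR.comp_flipSig.apply_cons2_zero_opt hinf1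

lemma iInf_H1_le_birk (hR : ReducedDW H H0 H1) {Hinf1 : ℝ} (hinf1 : Tendsto H1 atTop (𝓝 Hinf1))
    {n k : ℕ} (hn : 1 ≤ n) (hk : 0 < k) {z : Sig} (hz : z 0 = 1)
    (hzeros : ∀ r < n, z (k + r) = 0) : ⨅ m, H1 (n + m) ≤ birk H k z := by
  have := hR.comp_flipSig.iInf_H0_le_birk hinf1 hn hk (z := flipSig z) (by simp [hz])
    (by simpa using hzeros)
  rwa [hR.birk_comp_flipSig, flipSig_flipSig] at this

lemma peierls_zpt_eq_zero (hR : ReducedDW H H0 H1) {x : Sig} (hx : x 0 = 0) :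
    peierls H zpt x = 0 := by
  refine le_antisymm ?_ (hR.peierls_nonneg zpt x)
  refine peierls_le_of_forall fun p n => ⟨max p n, le_max_right p n, (cons2 0)^[max p n] x,
    nClose_iterate_cons2_const (le_max_left p n) 0 x, ?_, (hR.birk_iterate_cons2 hx _).le⟩
  simpa using nClose_refl p x

lemma peierls_zpt_eq_iInf (hR : ReducedDW H H0 H1) {Hinf0 : ℝ}
    (hinf0 : Tendsto H0 atTop (𝓝 Hinf0)) {n : ℕ} (hn : 1 ≤ n) {x : Sig}
    (hx : x ∈ cyl (List.replicate n 1 ++ [0])) :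
    peierls H zpt x = ((⨅ k, H0 (n + k) : ℝ) : EReal) := by
  have hx1 := (mem_cyl_replicate_append.1 hx).1
  refine le_antisymm ?_ ?_
  · have hle (m : ℕ) : peierls H zpt x ≤ ((H0 (n + m) + 0 : ℝ) : EReal) := by
      refine peierls_le_of_forall fun p n' => ⟨m + 1 + max p n', by omega,
        (cons2 0)^[max p n'] (cons2 0 ((cons2 1)^[m] x)),
        nClose_iterate_cons2_const (le_max_left p n') 0 _, by simpa using nClose_refl p x, ?_⟩
      rw [hR.birk_add_iterate_cons2 (cons2_apply_zero _ _), hR.birk_succ_cons2,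
        hR.birk_iterate_cons2 (hx1 0 hn),
        hR.apply_cons2_zero (by omega) (iterate_cons2_mem_cyl hx m), add_comm m]
    simpa using le_coe_ciInf_add hle
  · refine le_peierls_of_forall (n + 1) 1 fun k hk z hz hzx =>
      hR.iInf_H0_le_birk hinf0 hn hk (hz 0 (by omega)) fun r hr => ?_
    rw [add_comm, ← shft_iterate_apply z k r, hzx r (by omega)]
    exact hx1 r hr

lemma peierls_zpt_opt (hR : ReducedDW H H0 H1) {Hinf0 : ℝ}
    (hinf0 : Tendsto H0 atTop (𝓝 Hinf0)) : peierls H zpt opt = ((Hinf0 : ℝ) : EReal) := by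
  refine le_antisymm ?_ ?_
  · refine peierls_le_of_forall fun p n => ⟨0 + 1 + max p n, by omega,
      (cons2 0)^[max p n] (cons2 0 opt), nClose_iterate_cons2_const (le_max_left p n) 0 _,
      by simpa using nClose_refl p opt, ?_⟩
    rw [hR.birk_add_iterate_cons2 (cons2_apply_zero _ _), hR.birk_succ_cons2,
      hR.apply_cons2_zero_opt hinf0, birk_zero, add_zero]
  · refine coe_add_le_of_tendsto_of_iInf_tail (a := 0) hinf0 ?_ |>.trans_eq' (by simp)
    filter_upwards [eventually_ge_atTop 1] with D hD
    refine (le_peierls_of_forall D 1 fun k hk z hz hzo =>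
      hR.iInf_H0_le_birk hinf0 hD hk (hz 0 hD) fun r hr => ?_).trans_eq' (by simp)
    rw [add_comm, ← shft_iterate_apply z k r, hzo r hr]
    rfl

lemma add_le_peierls_zpt (hR : ReducedDW H H0 H1) {Hinf0 Hinf1 : ℝ}
    (hinf0 : Tendsto H0 atTop (𝓝 Hinf0)) (hinf1 : Tendsto H1 atTop (𝓝 Hinf1)) {x : Sig}
    (hx0 : x 0 = 0) (hx : x ≠ zpt) :
    (((⨅ n, H0 (n + 1)) + Hinf1 : ℝ) : EReal) ≤ peierls H x zpt := by
  obtain ⟨j, hj⟩ : ∃ j, x j = 1 := by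
    by_contra! h
    exact hx (funext fun i => by have := h i; simp only [zpt]; omega)
  have hj0 : 0 < j := Nat.pos_of_ne_zero fun h => by simp [h, hx0] at hj
  refine coe_add_le_of_tendsto_of_iInf_tail hinf1 ?_
  filter_upwards [eventually_ge_atTop 1] with D hD
  refine le_peierls_of_forall (max (j + 1) D) (j + 1) fun k hk z hzx hz0 => ?_
  obtain ⟨l, rfl⟩ : ∃ l, k = j + l := ⟨k - j, by omega⟩
  have hzj : z j = 1 := (hzx j (by omega)).trans hj
  have hwell0 : ⨅ n, H0 (n + 1) ≤ birk H j z := by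
    simpa only [add_comm 1] using hR.iInf_H0_le_birk hinf0 le_rfl hj0
      ((hzx 0 (by omega)).trans hx0) fun r hr => by simpa [show r = 0 by omega] using hzj
  have hwell1 : ⨅ m, H1 (D + m) ≤ birk H l (shft^[j] z) := by
    refine hR.iInf_H1_le_birk hinf1 hD (by omega) (by simpa [shft_iterate_apply] using hzj)
      fun r hr => ?_
    rw [shft_iterate_apply, show l + r + j = r + (j + l) by omega,
      ← shft_iterate_apply z (j + l) r]
    exact hz0 r (by omega)
  rw [birk_add]
  exact add_le_add hwell0 hwell1

lemma peierls_one_block_le (hR : ReducedDW H H0 H1) {Hinf1 : ℝ}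
    (hinf1 : Tendsto H1 atTop (𝓝 Hinf1)) (m j : ℕ) :
    peierls H ((cons2 0)^[j] (cons2 0 ((cons2 1)^[m] (cons2 1 zpt)))) zpt
      ≤ ((H0 (m + 1) + Hinf1 : ℝ) : EReal) := by
  have hblock : (cons2 1)^[m] (cons2 1 zpt) ∈ cyl (List.replicate (m + 1) 1 ++ [0]) :=
    iterate_cons2_mem_cyl (n := 1) (cons2_mem_cyl_cons.2 (mem_cyl_singleton (x := zpt).2 rfl))
      m
  refine peierls_le_of_forall fun p n => ⟨n + 1 + m + 1 + j, by omega, _, nClose_refl p _,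
    by simpa using nClose_refl p zpt, le_of_eq ?_⟩
  rw [hR.birk_add_iterate_cons2 (cons2_apply_zero _ _), hR.birk_succ_cons2,
    hR.apply_cons2_zero (by omega) hblock, hR.birk_add_iterate_cons2 (cons2_apply_zero _ _),
    hR.birk_succ_cons2, hR.apply_cons2_one_zpt hinf1, hR.birk_zpt, add_zero]

lemma liminf_peierls_zpt (hR : ReducedDW H H0 H1) {Hinf0 Hinf1 : ℝ}
    (hinf0 : Tendsto H0 atTop (𝓝 Hinf0)) (hinf1 : Tendsto H1 atTop (𝓝 Hinf1)) :
    liminf (fun x => peierls H x zpt) (𝓝[≠] zpt)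
      = (((⨅ n, H0 (n + 1)) + Hinf1 : ℝ) : EReal) := by
  refine le_antisymm (le_coe_ciInf_add fun m => liminf_le_of_frequently_le' ?_)
    (le_liminf_of_le (by isBoundedDefault) ?_)
  · exact (tendsto_one_block_nhdsNE_zpt m).frequently
      (Frequently.of_forall fun j => hR.peierls_one_block_le hinf1 m j)
  · have hcyl : {x : Sig | x 0 = 0} ∈ 𝓝 zpt :=
      ((isOpen_discrete {0}).preimage (continuous_apply 0)).mem_nhds rfl
    filter_upwards [self_mem_nhdsWithin, nhdsWithin_le_nhds hcyl] with x hx hx0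
    exact hR.add_le_peierls_zpt hinf0 hinf1 hx0 hx

end ReducedDW

/-- complete description of the Peierls barrier of a reduced double-well type
potential. -/
theorem stmt_9 (H : Sig → ℝ) (H0 H1 : ℕ → ℝ) (hR : ReducedDW H H0 H1)
    (Hinf0 Hinf1 : ℝ)
    (hinf0 : Tendsto H0 atTop (𝓝 Hinf0)) (hinf1 : Tendsto H1 atTop (𝓝 Hinf1)) :
    (∀ x ∈ cyl [0], peierls H zpt x = 0) ∧
    (∀ n : ℕ, 1 ≤ n → ∀ x ∈ cyl (List.replicate n 1 ++ [0]),
      peierls H zpt x = ((⨅ k : ℕ, H0 (n + k) : ℝ) : EReal)) ∧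
    peierls H zpt opt = ((Hinf0 : ℝ) : EReal) ∧
    Filter.liminf (fun x => peierls H x zpt) (𝓝[≠] zpt)
      = (((⨅ n : ℕ, H0 (n + 1)) + Hinf1 : ℝ) : EReal) ∧
    (∀ x ∈ cyl [1], peierls H opt x = 0) ∧
    (∀ n : ℕ, 1 ≤ n → ∀ x ∈ cyl (List.replicate n 0 ++ [1]),
      peierls H opt x = ((⨅ k : ℕ, H1 (n + k) : ℝ) : EReal)) ∧
    peierls H opt zpt = ((Hinf1 : ℝ) : EReal) ∧
    Filter.liminf (fun x => peierls H x opt) (𝓝[≠] opt)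
      = (((⨅ n : ℕ, H1 (n + 1)) + Hinf0 : ℝ) : EReal) := by
  have hF := hR.comp_flipSig
  have hflip (x y : Sig) : peierls H x y = peierls (H ∘ flipSig) (flipSig x) (flipSig y) := by
    rw [hR.peierls_comp_flipSig, flipSig_flipSig, flipSig_flipSig]
  refine ⟨fun x hx => hR.peierls_zpt_eq_zero (mem_cyl_singleton.1 hx),
    fun n hn x hx => hR.peierls_zpt_eq_iInf hinf0 hn hx, hR.peierls_zpt_opt hinf0,
    hR.liminf_peierls_zpt hinf0 hinf1, fun x hx => ?_, fun n hn x hx => ?_, ?_, ?_⟩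
  · rw [hflip, flipSig_opt]
    exact hF.peierls_zpt_eq_zero (by simp [mem_cyl_singleton.1 hx])
  · rw [hflip, flipSig_opt]
    exact hF.peierls_zpt_eq_iInf hinf1 hn
      (by simpa [List.map_replicate] using flipSig_mem_cyl_iff.2 hx)
  · rw [hflip, flipSig_opt, flipSig_zpt]
    exact hF.peierls_zpt_opt hinf1
  · have hcomp : (fun x => peierls H x opt) ∘ flipSig = fun x => peierls (H ∘ flipSig) x zpt :=
      funext fun x => by simp [hR.peierls_comp_flipSig]
    rw [← map_flipSig_nhdsNE_zpt, ← liminf_comp, hcomp]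
    exact hF.liminf_peierls_zpt hinf1 hinf0
end

section
/- Let H be a reduced double-well type potential, β > 0, and let λ_β, ν_β be the eigenvalue and the eigenprobability of the transfer operator L_β as above. Then for every n ≥ 1: ν_β([1^n 0]) = λ_β^{−(n−1)} ν_β([10]); ν_β([0^n 1]) = λ_β^{−(n−1)} ν_β([01]); ν_β([0 1^n 0]) = e^{−β H_n^0} λ_β^{−n} ν_β([10]); and ν_β([1 0^n 1]) = e^{−β H_n^1} λ_β^{−n} ν_β([01]). -/
open MeasureTheory Filter Topology

lemma mem_cyl_cons (j i : Fin 2) (w : List (Fin 2)) (x : Sig) :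
    cons2 j x ∈ cyl (i :: w) ↔ j = i ∧ x ∈ cyl w := by
  constructor
  · intro h
    refine ⟨h 0 (by simp), fun k hk => ?_⟩
    have := h (k+1) (by simpa using Nat.succ_lt_succ hk)
    simpa [cons2] using this
  · rintro ⟨rfl, h⟩
    intro k hk
    cases k with
    | zero => rfl
    | succ m => simpa [cons2] using h m (by simpa using Nat.lt_of_succ_lt_succ hk)

lemma isClopen_cyl (w : List (Fin 2)) : IsClopen (cyl w) := by
  have h : cyl w = ⋂ i : Fin w.length, (fun x : Sig => x i.val) ⁻¹' {w.get i} := by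
    ext x
    simp only [cyl, Set.mem_setOf_eq, Set.mem_iInter, Set.mem_preimage, Set.mem_singleton_iff]
    exact ⟨fun h i => h i.val i.isLt, fun h i hi => h ⟨i, hi⟩⟩
  rw [h]
  exact isClopen_iInter_of_finite fun i =>
    (isClopen_discrete {w.get i}).preimage (continuous_apply i.val)

lemma continuous_ind_cyl (w : List (Fin 2)) :
    Continuous ((cyl w).indicator (fun _ => (1:ℝ))) :=
  continuous_indicator (by simp [isClopen_cyl w]) continuous_const.continuousOn

lemma measurableSet_cyl (w : List (Fin 2)) : MeasurableSet (cyl w) :=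
  (isClopen_cyl w).isOpen.measurableSet

lemma ind_cons (i a : Fin 2) (w : List (Fin 2)) (x : Sig) :
    (cyl (a :: w)).indicator (fun _ => (1:ℝ)) (cons2 i x)
      = (if i = a then (1:ℝ) else 0) * (cyl w).indicator (fun _ => (1:ℝ)) x := by
  by_cases h : i = a <;> by_cases hx : x ∈ cyl w <;>
    simp [Set.indicator, mem_cyl_cons, h, hx]

lemma transfer_step (H : Sig → ℝ) (β c : ℝ) (a : Fin 2) (w : List (Fin 2))
    (hc : ∀ x ∈ cyl w, H (cons2 a x) = c) :
    transfer β H ((cyl (a :: w)).indicator (fun _ => (1:ℝ)))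
      = fun x => Real.exp (-β * c) * (cyl w).indicator (fun _ => (1:ℝ)) x := by
  funext x
  unfold transfer
  rw [ind_cons, ind_cons]
  by_cases hx : x ∈ cyl w
  · fin_cases a <;> simp [Set.indicator_of_mem hx] <;> exact Or.inl (hc x hx)
  · fin_cases a <;> simp [Set.indicator_of_notMem hx]

lemma nu_step (H : Sig → ℝ) (β lam c : ℝ) (ν : Measure Sig)
    (hν : IsProbabilityMeasure ν)
    (hνeig : ∀ f : Sig → ℝ, Continuous f → ∫ x, transfer β H f x ∂ν = lam * ∫ x, f x ∂ν)
    (hlam : 0 < lam) (a : Fin 2) (w : List (Fin 2))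
    (hc : ∀ x ∈ cyl w, H (cons2 a x) = c) :
    (ν (cyl (a :: w))).toReal = Real.exp (-β * c) * lam⁻¹ * (ν (cyl w)).toReal := by
  have h1 := hνeig _ (continuous_ind_cyl (a :: w))
  rw [transfer_step H β c a w hc] at h1
  rw [integral_const_mul] at h1
  have h2 : ∫ x, (cyl w).indicator (fun _ => (1:ℝ)) x ∂ν = (ν (cyl w)).toReal :=
    integral_indicator_one (measurableSet_cyl w)
  have h3 : ∫ x, (cyl (a :: w)).indicator (fun _ => (1:ℝ)) x ∂ν = (ν (cyl (a :: w))).toReal :=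
    integral_indicator_one (measurableSet_cyl (a :: w))
  rw [h2, h3, neg_mul] at h1
  field_simp
  rw [mul_comm]
  exact h1.symm

lemma cons_mem_pair (a : Fin 2) (x : Sig) (hx : x 0 = a) : cons2 a x ∈ cyl [a, a] := by
  intro k hk
  match k, hk with
  | 0, _ => rfl
  | 1, _ => simpa [cons2] using hx

lemma nu_rec (H : Sig → ℝ) (β lam : ℝ) (ν : Measure Sig) (hν : IsProbabilityMeasure ν)
    (hνeig : ∀ f : Sig → ℝ, Continuous f → ∫ x, transfer β H f x ∂ν = lam * ∫ x, f x ∂ν)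
    (hlam : 0 < lam) (a b : Fin 2)
    (hzero : ∀ y ∈ cyl [a, a], H y = 0) :
    ∀ n : ℕ, 1 ≤ n →
      (ν (cyl (List.replicate n a ++ [b]))).toReal
        = (lam ^ (n - 1))⁻¹ * (ν (cyl [a, b])).toReal := by
  intro n hn
  induction n, hn using Nat.le_induction with
  | base => simp [List.replicate]
  | succ n hn ih =>
    have hw : List.replicate (n + 1) a ++ [b] = a :: (List.replicate n a ++ [b]) := by
      simp [List.replicate_succ]
    have hc : ∀ x ∈ cyl (List.replicate n a ++ [b]), H (cons2 a x) = 0 := by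
      intro x hx
      obtain ⟨m, rfl⟩ : ∃ m, n = m + 1 := ⟨n - 1, by omega⟩
      rw [List.replicate_succ, List.cons_append] at hx
      have hx0 : x 0 = a := by simpa using hx 0 (by simp)
      exact hzero _ (cons_mem_pair a x hx0)
    rw [hw, nu_step H β lam 0 ν hν hνeig hlam a _ hc, ih]
    rw [mul_zero, Real.exp_zero,
      show n + 1 - 1 = (n - 1) + 1 by omega, pow_succ, mul_inv]
    ring

/-- explicit formulas for the eigenprobability `ν_β` on the cylinders
`[1^n 0]`, `[0^n 1]`, `[0 1^n 0]`, `[1 0^n 1]`, for a reduced double-well type potential. -/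
theorem stmt_11 (H : Sig → ℝ) (H0 H1 : ℕ → ℝ) (hR : ReducedDW H H0 H1)
    (β : ℝ) (hβ : 0 < β) (Φ : Sig → ℝ) (lam : ℝ) (ν : Measure Sig)
    (hΦc : Continuous Φ) (hΦpos : ∀ x, 0 < Φ x) (hΦmax : IsGreatest (Set.range Φ) 1)
    (hlam : 0 < lam) (heig : transfer β H Φ = fun x => lam * Φ x)
    (hν : IsProbabilityMeasure ν)
    (hνeig : ∀ f : Sig → ℝ, Continuous f → ∫ x, transfer β H f x ∂ν = lam * ∫ x, f x ∂ν) :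
    ∀ n : ℕ, 1 ≤ n →
      (ν (cyl (List.replicate n 1 ++ [0]))).toReal
        = (lam ^ (n - 1))⁻¹ * (ν (cyl [1, 0])).toReal ∧
      (ν (cyl (List.replicate n 0 ++ [1]))).toReal
        = (lam ^ (n - 1))⁻¹ * (ν (cyl [0, 1])).toReal ∧
      (ν (cyl (0 :: (List.replicate n 1 ++ [0])))).toReal
        = Real.exp (-β * H0 n) * (lam ^ n)⁻¹ * (ν (cyl [1, 0])).toReal ∧
      (ν (cyl (1 :: (List.replicate n 0 ++ [1])))).toReal
        = Real.exp (-β * H1 n) * (lam ^ n)⁻¹ * (ν (cyl [0, 1])).toReal := by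
  intro n hn
  have hz1 : ∀ y ∈ cyl [(1:Fin 2), 1], H y = 0 := fun y hy => hR.zero y (Or.inr hy)
  have hz0 : ∀ y ∈ cyl [(0:Fin 2), 0], H y = 0 := fun y hy => hR.zero y (Or.inl hy)
  have p1 := nu_rec H β lam ν hν hνeig hlam 1 0 hz1 n hn
  have p2 := nu_rec H β lam ν hν hνeig hlam 0 1 hz0 n hn
  have hpow : lam⁻¹ * (lam ^ (n - 1))⁻¹ = (lam ^ n)⁻¹ := by
    rw [← mul_inv, ← pow_succ', show n - 1 + 1 = n from by omega]
  have hc0 : ∀ x ∈ cyl (List.replicate n 1 ++ [0]), H (cons2 0 x) = H0 n := by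
    intro x hx
    exact hR.val0 n hn _ ((mem_cyl_cons 0 0 _ x).2 ⟨rfl, hx⟩)
  have hc1 : ∀ x ∈ cyl (List.replicate n 0 ++ [1]), H (cons2 1 x) = H1 n := by
    intro x hx
    exact hR.val1 n hn _ ((mem_cyl_cons 1 1 _ x).2 ⟨rfl, hx⟩)
  have p3 := nu_step H β lam (H0 n) ν hν hνeig hlam 0 _ hc0
  have p4 := nu_step H β lam (H1 n) ν hν hνeig hlam 1 _ hc1
  refine ⟨p1, p2, ?_, ?_⟩
  · rw [p3, p1, ← hpow]; ring
  · rw [p4, p2, ← hpow]; ring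
end
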